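/- Behavior of PDHG when both primal and dual are infeasible: consider a standard-form LP whose primal problem {x : Ax = b, x ≥ 0} is infeasible and whose dual problem {y : Aᵀy ≤ c} is infeasible, and let {z^k = (x^k, y^k)} be the PDHG iterates with step size 0 < s < 1/‖A‖₂ from an arbitrary starting point. Then ‖x^k‖ → ∞ and ‖y^k‖ → ∞, and the components v = (v_x, v_y) of the infimal displacement vector of the PDHG operator T are infeasibility certificates: v_x ≥ 0, A v_x = 0 and cᵀ v_x < 0 (a certificate of dual infeasibility), and Aᵀ v_y ≤ 0 and bᵀ v_y > 0 (a certificate of primal infeasibility). -/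

import Mathlib

open Matrix Filter Topology

/-- Euclidean norm of a vector in `ℝ^d`. -/
noncomputable def enormVec {d : ℕ} (x : Fin d → ℝ) : ℝ := Real.sqrt (x ⬝ᵥ x)

/-- Spectral norm (ℓ₂ operator norm) of a matrix. -/
noncomputable def specNorm {m n : ℕ} (A : Matrix (Fin m) (Fin n) ℝ) : ℝ :=
  sSup {t | ∃ x : Fin n → ℝ, x ⬝ᵥ x ≤ 1 ∧ t = enormVec (A.mulVec x)}

/-- Componentwise positive part (projection onto the nonnegative orthant). -/
def projPos {d : ℕ} (x : Fin d → ℝ) : Fin d → ℝ := fun i => max (x i) 0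

/-- One PDHG iteration with equal primal/dual step size `s`. -/
noncomputable def pdhgT {m n : ℕ} (A : Matrix (Fin m) (Fin n) ℝ) (b : Fin m → ℝ)
    (c : Fin n → ℝ) (s : ℝ) (z : (Fin n → ℝ) × (Fin m → ℝ)) : (Fin n → ℝ) × (Fin m → ℝ) :=
  let x' := projPos (z.1 + s • Aᵀ.mulVec z.2 - s • c)
  (x', z.2 - s • A.mulVec ((2 : ℝ) • x' - z.1) + s • b)

/-- The Lagrangian `L(x,y) = cᵀx - yᵀAx + bᵀy`. -/
noncomputable def lagr {m n : ℕ} (A : Matrix (Fin m) (Fin n) ℝ) (b : Fin m → ℝ)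
    (c : Fin n → ℝ) (x : Fin n → ℝ) (y : Fin m → ℝ) : ℝ :=
  c ⬝ᵥ x - y ⬝ᵥ A.mulVec x + b ⬝ᵥ y

/-- Membership in `Z = ℝ₊ⁿ × ℝᵐ`. -/
def inZ {m n : ℕ} (z : (Fin n → ℝ) × (Fin m → ℝ)) : Prop := ∀ i, 0 ≤ z.1 i

/-- Saddle point of `L` over `Z`. -/
def isSaddle {m n : ℕ} (A : Matrix (Fin m) (Fin n) ℝ) (b : Fin m → ℝ) (c : Fin n → ℝ)
    (z : (Fin n → ℝ) × (Fin m → ℝ)) : Prop :=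
  inZ z ∧ ∀ w : (Fin n → ℝ) × (Fin m → ℝ), inZ w →
    lagr A b c z.1 w.2 ≤ lagr A b c z.1 z.2 ∧ lagr A b c z.1 z.2 ≤ lagr A b c w.1 z.2

/-- The quadratic form `‖z‖²_{P_s}` induced by `P_s = [[(1/s)I, Aᵀ],[A,(1/s)I]]`. -/
noncomputable def PsSq {m n : ℕ} (A : Matrix (Fin m) (Fin n) ℝ) (s : ℝ)
    (z : (Fin n → ℝ) × (Fin m → ℝ)) : ℝ :=
  (1 / s) * (z.1 ⬝ᵥ z.1 + z.2 ⬝ᵥ z.2) + 2 * (A.mulVec z.1 ⬝ᵥ z.2)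

/-- The `P_s` norm. -/
noncomputable def PsNorm {m n : ℕ} (A : Matrix (Fin m) (Fin n) ℝ) (s : ℝ)
    (z : (Fin n → ℝ) × (Fin m → ℝ)) : ℝ := Real.sqrt (PsSq A s z)

/-- Euclidean norm on the primal-dual pair space. -/
noncomputable def enormP {m n : ℕ} (z : (Fin n → ℝ) × (Fin m → ℝ)) : ℝ :=
  Real.sqrt (z.1 ⬝ᵥ z.1 + z.2 ⬝ᵥ z.2)

/-- Normalized duality gap `ρ_r(z)`. -/
noncomputable def rho {m n : ℕ} (A : Matrix (Fin m) (Fin n) ℝ) (b : Fin m → ℝ)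
    (c : Fin n → ℝ) (r : ℝ) (z : (Fin n → ℝ) × (Fin m → ℝ)) : ℝ :=
  (1 / r) * sSup {g | ∃ w : (Fin n → ℝ) × (Fin m → ℝ), inZ w ∧ enormP (w - z) ≤ r ∧
    g = lagr A b c z.1 w.2 - lagr A b c w.1 z.2}

/-- Euclidean distance to the saddle-point set `Z*`. -/
noncomputable def dist2 {m n : ℕ} (A : Matrix (Fin m) (Fin n) ℝ) (b : Fin m → ℝ)
    (c : Fin n → ℝ) (z : (Fin n → ℝ) × (Fin m → ℝ)) : ℝ :=
  sInf {d | ∃ w, isSaddle A b c w ∧ d = enormP (z - w)}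

/-- `P_s`-distance to the saddle-point set `Z*`. -/
noncomputable def distPs {m n : ℕ} (A : Matrix (Fin m) (Fin n) ℝ) (b : Fin m → ℝ)
    (c : Fin n → ℝ) (s : ℝ) (z : (Fin n → ℝ) × (Fin m → ℝ)) : ℝ :=
  sInf {d | ∃ w, isSaddle A b c w ∧ d = PsNorm A s (z - w)}

/-- `v` is the infimal displacement vector of `T`: the minimum-`P_s`-norm element
of the closure of `range (T - I)`. -/
def isIDV {m n : ℕ} (A : Matrix (Fin m) (Fin n) ℝ) (s : ℝ)
    (T : (Fin n → ℝ) × (Fin m → ℝ) → (Fin n → ℝ) × (Fin m → ℝ))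
    (v : (Fin n → ℝ) × (Fin m → ℝ)) : Prop :=
  v ∈ closure {w | ∃ z, w = T z - z} ∧
  ∀ w ∈ closure {w | ∃ z, w = T z - z}, PsNorm A s v ≤ PsNorm A s w


section AuxPDHG
set_option linter.unusedVariables false

section VecBasics
variable {d : ℕ}

lemma dsn (x : Fin d → ℝ) : 0 ≤ x ⬝ᵥ x :=
  Finset.sum_nonneg fun i _ => mul_self_nonneg (x i)

lemma dot_sq_le (x y : Fin d → ℝ) : (x ⬝ᵥ y)^2 ≤ (x ⬝ᵥ x) * (y ⬝ᵥ y) := by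
  simpa [dotProduct, pow_two] using
    Finset.sum_mul_sq_le_sq_mul_sq Finset.univ x y

lemma enormVec_nonneg (x : Fin d → ℝ) : 0 ≤ enormVec x := Real.sqrt_nonneg _

lemma enormVec_mul_self (x : Fin d → ℝ) : enormVec x * enormVec x = x ⬝ᵥ x :=
  Real.mul_self_sqrt (dsn x)

lemma dot_le (x y : Fin d → ℝ) : x ⬝ᵥ y ≤ enormVec x * enormVec y := by
  have h := dot_sq_le x y
  have : x ⬝ᵥ y ≤ Real.sqrt ((x ⬝ᵥ y)^2) := by
    rw [Real.sqrt_sq_eq_abs]; exact le_abs_self _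
  refine this.trans ?_
  rw [show enormVec x * enormVec y = Real.sqrt ((x ⬝ᵥ x) * (y ⬝ᵥ y)) from
    (Real.sqrt_mul (dsn x) _).symm]
  exact Real.sqrt_le_sqrt h

lemma enormVec_smul (t : ℝ) (x : Fin d → ℝ) : enormVec (t • x) = |t| * enormVec x := by
  unfold enormVec
  rw [smul_dotProduct, dotProduct_smul, smul_eq_mul, smul_eq_mul, ← mul_assoc,
    Real.sqrt_mul (mul_self_nonneg t), Real.sqrt_mul_self_eq_abs t]

lemma enormVec_add_le (x y : Fin d → ℝ) : enormVec (x + y) ≤ enormVec x + enormVec y := by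
  have hxy := dot_le x y
  have h1 := enormVec_mul_self x; have h2 := enormVec_mul_self y
  have hexp : (x + y) ⬝ᵥ (x + y) = x ⬝ᵥ x + 2 * (x ⬝ᵥ y) + y ⬝ᵥ y := by
    simp [add_dotProduct, dotProduct_add, dotProduct_comm y x]; ring
  have : (x+y) ⬝ᵥ (x+y) ≤ (enormVec x + enormVec y)^2 := by nlinarith
  calc enormVec (x+y) = Real.sqrt ((x+y) ⬝ᵥ (x+y)) := rfl
    _ ≤ Real.sqrt ((enormVec x + enormVec y)^2) := Real.sqrt_le_sqrt this
    _ = |enormVec x + enormVec y| := Real.sqrt_sq_eq_abs _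
    _ = enormVec x + enormVec y := abs_of_nonneg (add_nonneg (enormVec_nonneg x) (enormVec_nonneg y))

lemma enormVec_zero : enormVec (0 : Fin d → ℝ) = 0 := by
  unfold enormVec; simp

lemma enormVec_pos_of_ne {x : Fin d → ℝ} (hx : x ≠ 0) : 0 < enormVec x := by
  have h1 : x ⬝ᵥ x ≠ 0 := fun h => hx (dotProduct_self_eq_zero.mp h)
  exact Real.sqrt_pos.mpr (lt_of_le_of_ne (dsn x) (Ne.symm h1))

end VecBasics

section Spec
variable {m n : ℕ} (A : Matrix (Fin m) (Fin n) ℝ)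

lemma frob_bound (x : Fin n → ℝ) (hx : x ⬝ᵥ x ≤ 1) :
    enormVec (A.mulVec x) ≤ Real.sqrt (∑ i, ∑ j, (A i j)^2) := by
  have hdot : ∀ i, (A.mulVec x i)^2 ≤ (∑ j, (A i j)^2) * (x ⬝ᵥ x) := by
    intro i
    have := Finset.sum_mul_sq_le_sq_mul_sq Finset.univ (fun j => A i j) x
    simpa [Matrix.mulVec, dotProduct, pow_two] using this
  have h1 : (A.mulVec x) ⬝ᵥ (A.mulVec x) ≤ ∑ i, ∑ j, (A i j)^2 := by
    have h2 : (A.mulVec x) ⬝ᵥ (A.mulVec x) = ∑ i, (A.mulVec x i)^2 := by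
      simp [dotProduct, pow_two]
    rw [h2]
    calc ∑ i, (A.mulVec x i)^2 ≤ ∑ i, (∑ j, (A i j)^2) * (x ⬝ᵥ x) :=
          Finset.sum_le_sum (fun i _ => hdot i)
      _ ≤ ∑ i, (∑ j, (A i j)^2) * 1 := by
          refine Finset.sum_le_sum (fun i _ => ?_)
          refine mul_le_mul_of_nonneg_left hx ?_
          exact Finset.sum_nonneg fun j _ => sq_nonneg _
      _ = ∑ i, ∑ j, (A i j)^2 := by simp
  exact Real.sqrt_le_sqrt h1

lemma specSet_bdd : BddAbove {t | ∃ x : Fin n → ℝ, x ⬝ᵥ x ≤ 1 ∧ t = enormVec (A.mulVec x)} := by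
  refine ⟨Real.sqrt (∑ i, ∑ j, (A i j)^2), ?_⟩
  rintro t ⟨x, hx, rfl⟩
  exact frob_bound A x hx

lemma specNorm_nonneg : 0 ≤ specNorm A := by
  refine le_csSup (specSet_bdd A) ⟨0, ?_, ?_⟩
  · simp [dotProduct]
  · simp [Matrix.mulVec_zero, enormVec_zero]

lemma spec_bound (x : Fin n → ℝ) : enormVec (A.mulVec x) ≤ specNorm A * enormVec x := by
  by_cases hx : x = 0
  · simp [hx, Matrix.mulVec_zero, enormVec_zero]
  · have hex : 0 < enormVec x := enormVec_pos_of_ne hx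
    set u : Fin n → ℝ := (enormVec x)⁻¹ • x with hu
    have huu : u ⬝ᵥ u ≤ 1 := by
      rw [hu, smul_dotProduct, dotProduct_smul, smul_eq_mul, smul_eq_mul,
        ← mul_assoc, ← enormVec_mul_self x]
      rw [show (enormVec x)⁻¹ * (enormVec x)⁻¹ * (enormVec x * enormVec x) = ((enormVec x)⁻¹ * enormVec x) * ((enormVec x)⁻¹ * enormVec x) by ring]
      rw [inv_mul_cancel₀ (ne_of_gt hex)]; norm_num
    have hmem : enormVec (A.mulVec u) ≤ specNorm A :=
      le_csSup (specSet_bdd A) ⟨u, huu, rfl⟩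
    have hAu : enormVec (A.mulVec u) = (enormVec x)⁻¹ * enormVec (A.mulVec x) := by
      rw [hu, Matrix.mulVec_smul, enormVec_smul, abs_of_nonneg (inv_nonneg.mpr hex.le)]
    have := mul_le_mul_of_nonneg_right hmem hex.le
    rw [hAu] at this
    calc enormVec (A.mulVec x) = (enormVec x)⁻¹ * enormVec (A.mulVec x) * enormVec x := by
          field_simp
      _ ≤ specNorm A * enormVec x := this

end Spec

noncomputable def ip {m n : ℕ} (A : Matrix (Fin m) (Fin n) ℝ) (s : ℝ)
    (z w : (Fin n → ℝ) × (Fin m → ℝ)) : ℝ :=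
  (1 / s) * (z.1 ⬝ᵥ w.1 + z.2 ⬝ᵥ w.2) + A.mulVec z.1 ⬝ᵥ w.2 + A.mulVec w.1 ⬝ᵥ z.2

section IP
variable {m n : ℕ} (A : Matrix (Fin m) (Fin n) ℝ) (s : ℝ)

lemma adjdot (x : Fin n → ℝ) (y : Fin m → ℝ) : Aᵀ.mulVec y ⬝ᵥ x = A.mulVec x ⬝ᵥ y := by
  rw [Matrix.mulVec_transpose, ← dotProduct_mulVec, dotProduct_comm]

lemma ip_self (z : (Fin n → ℝ) × (Fin m → ℝ)) : ip A s z z = PsSq A s z := by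
  unfold ip PsSq; ring

lemma PsSq_sub (a b : (Fin n → ℝ) × (Fin m → ℝ)) :
    PsSq A s (a - b) = PsSq A s a - 2 * ip A s a b + PsSq A s b := by
  unfold ip PsSq
  simp only [Prod.fst_sub, Prod.snd_sub, Matrix.mulVec_sub, sub_dotProduct,
    dotProduct_sub, dotProduct_comm b.1 a.1, dotProduct_comm b.2 a.2]
  ring

lemma ip_sub_snd (a b c : (Fin n → ℝ) × (Fin m → ℝ)) :
    ip A s a (b - c) = ip A s a b - ip A s a c := by
  unfold ip
  simp only [Prod.fst_sub, Prod.snd_sub, Matrix.mulVec_sub, sub_dotProduct,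
    dotProduct_sub]
  ring

lemma PsSq_coercive (hN : specNorm A < 1/s) (hs : 0 < s) (u : (Fin n → ℝ) × (Fin m → ℝ)) :
    (1/s - specNorm A) * (u.1 ⬝ᵥ u.1 + u.2 ⬝ᵥ u.2) ≤ PsSq A s u := by
  have hA : |A.mulVec u.1 ⬝ᵥ u.2| ≤ specNorm A * (enormVec u.1 * enormVec u.2) := by
    rw [abs_le]; constructor
    · have h1 := dot_le (-(A.mulVec u.1)) u.2
      have h2 : (-(A.mulVec u.1)) ⬝ᵥ u.2 = -(A.mulVec u.1 ⬝ᵥ u.2) := by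
        simp [neg_dotProduct]
      have h3 : enormVec (-(A.mulVec u.1)) = enormVec (A.mulVec u.1) := by
        rw [show -(A.mulVec u.1) = (-1 : ℝ) • (A.mulVec u.1) by simp, enormVec_smul]; simp
      rw [h2, h3] at h1
      have h4 := mul_le_mul_of_nonneg_right (spec_bound A u.1) (enormVec_nonneg u.2)
      nlinarith [enormVec_nonneg u.2]
    · have h1 := dot_le (A.mulVec u.1) u.2
      have h4 := mul_le_mul_of_nonneg_right (spec_bound A u.1) (enormVec_nonneg u.2)
      nlinarith [enormVec_nonneg u.2]
  have h2ab : 2 * (enormVec u.1 * enormVec u.2) ≤ u.1 ⬝ᵥ u.1 + u.2 ⬝ᵥ u.2 := by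
    nlinarith [enormVec_mul_self u.1, enormVec_mul_self u.2, sq_nonneg (enormVec u.1 - enormVec u.2)]
  have hN0 := specNorm_nonneg A
  unfold PsSq
  nlinarith [abs_le.mp hA, enormVec_nonneg u.1, enormVec_nonneg u.2,
    mul_nonneg (enormVec_nonneg u.1) (enormVec_nonneg u.2)]

lemma PsSq_nonneg (hN : specNorm A < 1/s) (hs : 0 < s) (u : (Fin n → ℝ) × (Fin m → ℝ)) :
    0 ≤ PsSq A s u := by
  have h := PsSq_coercive A s hN hs u
  have h1 : 0 ≤ (1/s - specNorm A) * (u.1 ⬝ᵥ u.1 + u.2 ⬝ᵥ u.2) := by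
    apply mul_nonneg (by linarith) (add_nonneg (dsn u.1) (dsn u.2))
  linarith

lemma PsSq_eq_zero (hN : specNorm A < 1/s) (hs : 0 < s) {u : (Fin n → ℝ) × (Fin m → ℝ)}
    (hu : PsSq A s u ≤ 0) : u = 0 := by
  have h := PsSq_coercive A s hN hs u
  have hd1 := dsn u.1; have hd2 := dsn u.2
  have hpos : 0 < 1/s - specNorm A := by linarith
  have hsum : u.1 ⬝ᵥ u.1 + u.2 ⬝ᵥ u.2 ≤ 0 := by nlinarith
  have h1 : u.1 ⬝ᵥ u.1 = 0 := le_antisymm (by linarith) hd1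
  have h2 : u.2 ⬝ᵥ u.2 = 0 := le_antisymm (by linarith) hd2
  have := dotProduct_self_eq_zero.mp h1
  have := dotProduct_self_eq_zero.mp h2
  exact Prod.ext (by assumption) (by assumption)

end IP

lemma projPos_nonneg {d : ℕ} (x : Fin d → ℝ) (i : Fin d) : 0 ≤ projPos x i := le_max_right _ _

lemma proj_ineq {d : ℕ} (w u : Fin d → ℝ) (hu : ∀ i, 0 ≤ u i) :
    0 ≤ (projPos w - w) ⬝ᵥ (u - projPos w) := by
  refine Finset.sum_nonneg fun i _ => ?_
  simp only [Pi.sub_apply, projPos]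
  rcases le_or_gt 0 (w i) with h | h
  · rw [max_eq_left h]; simp
  · rw [max_eq_right h.le]
    have : 0 ≤ -w i := by linarith
    have := hu i
    nlinarith

section Firm
variable {m n : ℕ} (A : Matrix (Fin m) (Fin n) ℝ) (b : Fin m → ℝ) (c : Fin n → ℝ)
  {s : ℝ}

lemma pdhg_diff (z z' : (Fin n → ℝ) × (Fin m → ℝ)) :
    pdhgT A b c s z - pdhgT A b c s z' =
      ((projPos (z.1 + s • Aᵀ.mulVec z.2 - s • c) - projPos (z'.1 + s • Aᵀ.mulVec z'.2 - s • c)),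
       (z.2 - z'.2) - s • A.mulVec ((2:ℝ) •
         (projPos (z.1 + s • Aᵀ.mulVec z.2 - s • c) - projPos (z'.1 + s • Aᵀ.mulVec z'.2 - s • c))
         - (z.1 - z'.1))) := by
  set p := projPos (z.1 + s • Aᵀ.mulVec z.2 - s • c)
  set p' := projPos (z'.1 + s • Aᵀ.mulVec z'.2 - s • c)
  unfold pdhgT
  refine Prod.ext rfl ?_
  show z.2 - s • A.mulVec ((2:ℝ) • p - z.1) + s • b - (z'.2 - s • A.mulVec ((2:ℝ) • p' - z'.1) + s • b)
      = (z.2 - z'.2) - s • A.mulVec ((2:ℝ) • (p - p') - (z.1 - z'.1))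
  have harg : (2:ℝ) • (p - p') - (z.1 - z'.1) = ((2:ℝ) • p - z.1) - ((2:ℝ) • p' - z'.1) := by
    module
  rw [harg]
  simp only [Matrix.mulVec_sub, smul_sub]
  abel

lemma key_identity (hs : s ≠ 0) (dxp dx : Fin n → ℝ) (dy : Fin m → ℝ) :
    ip A s (dxp, dy - s • A.mulVec ((2:ℝ) • dxp - dx))
      ((dx, dy) - (dxp, dy - s • A.mulVec ((2:ℝ) • dxp - dx)))
      = (1/s) * ((dx - dxp + s • Aᵀ.mulVec dy) ⬝ᵥ dxp) := by
  unfold ip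
  simp only [Prod.fst_sub, Prod.snd_sub, Matrix.mulVec_sub, Matrix.mulVec_add, Matrix.mulVec_smul,
    sub_dotProduct, dotProduct_sub, add_dotProduct, dotProduct_add,
    smul_dotProduct, dotProduct_smul, smul_eq_mul, smul_sub,
    dotProduct_comm dy (A.mulVec dxp), dotProduct_comm dy (A.mulVec dx),
    dotProduct_comm (A.mulVec dx) (A.mulVec dxp),
    adjdot A dxp dy, adjdot A dx dy,
    dotProduct_comm dxp dx]
  field_simp
  ring

lemma firmNE (hs : 0 < s) (z z' : (Fin n → ℝ) × (Fin m → ℝ)) :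
    PsSq A s (pdhgT A b c s z - pdhgT A b c s z') ≤
      ip A s (pdhgT A b c s z - pdhgT A b c s z') (z - z') := by
  set p := projPos (z.1 + s • Aᵀ.mulVec z.2 - s • c) with hp
  set p' := projPos (z'.1 + s • Aᵀ.mulVec z'.2 - s • c) with hp'
  set dxp := p - p' with hdxp
  set dx := z.1 - z'.1 with hdx
  set dy := z.2 - z'.2 with hdy
  have hdiff : pdhgT A b c s z - pdhgT A b c s z' =
      (dxp, dy - s • A.mulVec ((2:ℝ) • dxp - dx)) := pdhg_diff A b c z z'
  -- projection inequalities
  have h1 : 0 ≤ (p - (z.1 + s • Aᵀ.mulVec z.2 - s • c)) ⬝ᵥ (p' - p) :=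
    proj_ineq _ _ (projPos_nonneg _)
  have h2 : 0 ≤ (p' - (z'.1 + s • Aᵀ.mulVec z'.2 - s • c)) ⬝ᵥ (p - p') :=
    proj_ineq _ _ (projPos_nonneg _)
  have hkey : 0 ≤ (dx - dxp + s • Aᵀ.mulVec dy) ⬝ᵥ dxp := by
    have hsum : (dx - dxp + s • Aᵀ.mulVec dy) ⬝ᵥ dxp =
        (p - (z.1 + s • Aᵀ.mulVec z.2 - s • c)) ⬝ᵥ (p' - p) +
        (p' - (z'.1 + s • Aᵀ.mulVec z'.2 - s • c)) ⬝ᵥ (p - p') := by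
      rw [hdxp, hdx, hdy]
      simp only [Matrix.mulVec_sub, sub_dotProduct, dotProduct_sub,
        add_dotProduct, dotProduct_add, smul_dotProduct,
        dotProduct_smul, smul_eq_mul, smul_sub,
        dotProduct_comm p' p, dotProduct_comm z.1 p, dotProduct_comm z'.1 p,
        dotProduct_comm z.1 p', dotProduct_comm z'.1 p',
        dotProduct_comm c p, dotProduct_comm c p',
        dotProduct_comm (Aᵀ.mulVec z.2) p, dotProduct_comm (Aᵀ.mulVec z'.2) p,
        dotProduct_comm (Aᵀ.mulVec z.2) p', dotProduct_comm (Aᵀ.mulVec z'.2) p']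
      ring
    linarith
  have hident := key_identity A (ne_of_gt hs) dxp dx dy
  rw [hdiff]
  rw [show (z - z' : (Fin n → ℝ) × (Fin m → ℝ)) = (dx, dy) by
    rw [hdx, hdy]; exact Prod.ext rfl rfl]
  have hexp : ip A s (dxp, dy - s • A.mulVec ((2:ℝ) • dxp - dx)) (dx, dy) -
      PsSq A s (dxp, dy - s • A.mulVec ((2:ℝ) • dxp - dx)) =
      (1/s) * ((dx - dxp + s • Aᵀ.mulVec dy) ⬝ᵥ dxp) := by
    rw [← ip_self, ← ip_sub_snd]
    exact key_identity A (ne_of_gt hs) dxp dx dy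
  have hfrac : 0 ≤ (1/s) * ((dx - dxp + s • Aᵀ.mulVec dy) ⬝ᵥ dxp) := by
    apply mul_nonneg (by positivity) hkey
  linarith

lemma psq_mono (hN : specNorm A < 1/s) (hs : 0 < s) (z z' : (Fin n → ℝ) × (Fin m → ℝ)) :
    PsSq A s (pdhgT A b c s z - pdhgT A b c s z') ≤ PsSq A s (z - z') := by
  have h1 := firmNE A b c hs z z'
  have h2 := PsSq_nonneg A s hN hs ((pdhgT A b c s z - pdhgT A b c s z') - (z - z'))
  have h3 := PsSq_sub A s (pdhgT A b c s z - pdhgT A b c s z') (z - z')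
  linarith


/-- Facts extractable from the one-dimensional recurrences `max (a+k*d) 0 = r + k*w`. -/
lemma coord_facts {a d r w : ℝ} (h : ∀ k : ℕ, max (a + k*d) 0 = r + k*w) :
    0 ≤ w ∧ d ≤ w ∧ 0 ≤ r ∧ (0 < w → (d = w ∧ a = r)) ∧ (d < w → (w = 0 ∧ r = 0)) ∧
      ((w = 0 ∧ d = 0) → (a = r ∨ (r = 0 ∧ a ≤ 0))) := by
  have h0 : ∀ k : ℕ, 0 ≤ r + k*w := fun k => (h k) ▸ le_max_right _ 0
  have hr : 0 ≤ r := by have := h0 0; simpa using this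
  have hw : 0 ≤ w := by
    by_contra hw
    push_neg at hw
    obtain ⟨k, hk⟩ := exists_nat_gt (r / (-w))
    have h1 : r / (-w) < k := hk
    have h2 : r < k * (-w) := (div_lt_iff₀ (by linarith)).mp h1
    have := h0 k
    nlinarith
  have hdw : d ≤ w := by
    by_contra hdw
    push_neg at hdw
    obtain ⟨k, hk⟩ := exists_nat_gt ((r - a) / (d - w))
    have h2 : r - a < k * (d - w) := (div_lt_iff₀ (by linarith)).mp hk
    have h3 : a + k*d ≤ r + k*w := (h k) ▸ le_max_left _ 0
    nlinarith
  have hpos : 0 < w → (d = w ∧ a = r) := by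
    intro hwpos
    obtain ⟨k₀, hk₀⟩ := exists_nat_gt ((-r) / w)
    have hkpos : ∀ j : ℕ, 0 < r + (k₀ + j : ℕ)*w := by
      intro j
      have h1 : (-r)/w < k₀ := hk₀
      have h2 : -r < k₀ * w := (div_lt_iff₀ hwpos).mp h1
      have h3 : (k₀ : ℝ) ≤ ((k₀ + j : ℕ) : ℝ) := by push_cast; linarith [Nat.cast_nonneg (α := ℝ) j]
      nlinarith
    have heq : ∀ j : ℕ, a + (k₀ + j : ℕ)*d = r + (k₀ + j : ℕ)*w := by
      intro j
      have h1 := h (k₀ + j)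
      have h2 := hkpos j
      rcases max_cases (a + (k₀ + j : ℕ)*d) 0 with ⟨he, _⟩ | ⟨he, _⟩
      · rw [he] at h1; exact h1
      · rw [he] at h1; linarith
    have e0 := heq 0
    have e1 := heq 1
    push_cast at e0 e1
    constructor
    · nlinarith
    · nlinarith
  refine ⟨hw, hdw, hr, hpos, ?_, ?_⟩
  · intro hdlt
    have hw0 : w = 0 := by
      rcases lt_or_eq_of_le hw with h1 | h1
      · exact absurd ((hpos h1).1) (ne_of_lt hdlt)
      · exact h1.symm
    refine ⟨hw0, ?_⟩
    rw [hw0] at hdlt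
    obtain ⟨k, hk⟩ := exists_nat_gt (a / (-d))
    have h2 : a < k * (-d) := (div_lt_iff₀ (by linarith)).mp hk
    have h3 := h k
    rw [hw0] at h3
    have h4 : a + k*d < 0 := by nlinarith
    rw [max_eq_right h4.le] at h3
    linarith
  · rintro ⟨hw0, hd0⟩
    have h1 := h 0
    rw [hw0, hd0] at h1
    push_cast at h1
    simp only [mul_zero, add_zero] at h1
    rcases le_or_gt a 0 with ha | ha
    · right
      rw [max_eq_right ha] at h1
      exact ⟨h1.symm, ha⟩
    · left
      rw [max_eq_left ha.le] at h1
      exact h1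


end Firm

section ClosedImage

lemma closed_image_poly {E F : Type*} [NormedAddCommGroup E] [InnerProductSpace ℝ E]
    [FiniteDimensional ℝ E] [NormedAddCommGroup F] [NormedSpace ℝ F]
    (L : E →L[ℝ] F) {K : ℕ} (g : Fin K → E →L[ℝ] ℝ) (β : Fin K → ℝ) :
    IsClosed (L '' {x | ∀ i, g i x ≤ β i}) := by
  classical
  set C : Set E := {x | ∀ i, g i x ≤ β i} with hC
  have hCclosed : IsClosed C := by
    have : C = ⋂ i, (g i) ⁻¹' Set.Iic (β i) := by
      ext x; simp [hC, Set.mem_iInter, Set.mem_preimage, Set.mem_Iic]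
    rw [this]
    exact isClosed_iInter fun i => (isClosed_Iic).preimage (g i).continuous
  rw [← isSeqClosed_iff_isClosed]
  intro y p hy hyp
  have hmin : ∀ k : ℕ, ∃ x : E, (x ∈ C ∧ L x = y k) ∧
      ∀ x', x' ∈ C → L x' = y k → ‖x‖ ≤ ‖x'‖ := by
    intro k
    obtain ⟨x₀, hx₀C, hx₀L⟩ := hy k
    set S : Set E := C ∩ L ⁻¹' {y k} with hS
    have hSclosed : IsClosed S :=
      hCclosed.inter (isClosed_singleton.preimage L.continuous)
    have hKcpt : IsCompact (S ∩ Metric.closedBall 0 ‖x₀‖) :=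
      (isCompact_closedBall (0:E) ‖x₀‖).inter_left hSclosed
    have hne : (S ∩ Metric.closedBall 0 ‖x₀‖).Nonempty := by
      refine ⟨x₀, ⟨hx₀C, hx₀L⟩, ?_⟩
      rw [Metric.mem_closedBall, dist_zero_right]
    obtain ⟨xm, hxm, hxmin⟩ := hKcpt.exists_isMinOn hne continuous_norm.continuousOn
    refine ⟨xm, ⟨hxm.1.1, hxm.1.2⟩, ?_⟩
    intro x' hx'C hx'L
    by_cases hb : ‖x'‖ ≤ ‖x₀‖
    · exact hxmin ⟨⟨hx'C, hx'L⟩, by rwa [Metric.mem_closedBall, dist_zero_right]⟩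
    · have h1 : ‖xm‖ ≤ ‖x₀‖ := by
        have := hxm.2; rwa [Metric.mem_closedBall, dist_zero_right] at this
      linarith
  choose x hx hxmin using hmin
  by_cases hcase : ∃ M : ℝ, {k | ‖x k‖ ≤ M}.Infinite
  · obtain ⟨M, hM⟩ := hcase
    obtain ⟨φ, hφmono, hφ⟩ := Filter.extraction_of_frequently_atTop
      (Nat.frequently_atTop_iff_infinite.mpr hM)
    have hbdd : ∀ j, x (φ j) ∈ Metric.closedBall (0:E) M := fun j => by
      rw [Metric.mem_closedBall, dist_zero_right]; exact hφ j
    obtain ⟨a, _, ψ, hψmono, hψt⟩ :=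
      tendsto_subseq_of_bounded Metric.isBounded_closedBall hbdd
    have haC : a ∈ C :=
      hCclosed.mem_of_tendsto hψt (Filter.Eventually.of_forall fun j => (hx (φ (ψ j))).1)
    have h1 : Tendsto (fun j => L (x (φ (ψ j)))) atTop (𝓝 (L a)) :=
      (L.continuous.tendsto a).comp hψt
    have h2 : Tendsto (fun j => y (φ (ψ j))) atTop (𝓝 p) :=
      hyp.comp (hφmono.comp hψmono).tendsto_atTop
    have h3 : Tendsto (fun j => L (x (φ (ψ j)))) atTop (𝓝 p) := by
      refine h2.congr fun j => ?_
      exact ((hx (φ (ψ j))).2).symm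
    exact ⟨a, haC, tendsto_nhds_unique h1 h3⟩
  · push_neg at hcase
    have hxtop : Tendsto (fun k => ‖x k‖) atTop atTop := by
      rw [tendsto_atTop]
      intro M
      have hfin : {k | ‖x k‖ ≤ M}.Finite := hcase M
      have := hfin.eventually_cofinite_notMem
      rw [Nat.cofinite_eq_atTop] at this
      exact this.mono fun k hk => le_of_not_ge hk
    set dseq : ℕ → E := fun k => ‖x k‖⁻¹ • x k with hdseq
    have hdbdd : ∀ k, dseq k ∈ Metric.closedBall (0:E) 1 := by
      intro k; rw [Metric.mem_closedBall, dist_zero_right]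
      rcases eq_or_ne (x k) 0 with h | h
      · simp [hdseq, h]
      · rw [hdseq]
        simp only [norm_smul, norm_inv, norm_norm]
        rw [inv_mul_cancel₀ (norm_ne_zero_iff.mpr h)]
    obtain ⟨dstar, _, φ, hφmono, hφt⟩ :=
      tendsto_subseq_of_bounded Metric.isBounded_closedBall hdbdd
    have hxφtop : Tendsto (fun j => ‖x (φ j)‖) atTop atTop :=
      hxtop.comp hφmono.tendsto_atTop
    have hev1 : ∀ᶠ j in atTop, 1 ≤ ‖x (φ j)‖ := hxφtop.eventually_ge_atTop 1
    have hinv : Tendsto (fun j => ‖x (φ j)‖⁻¹) atTop (𝓝 0) := hxφtop.inv_tendsto_atTop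
    -- ‖dstar‖ = 1
    have hnd : Tendsto (fun j => ‖dseq (φ j)‖) atTop (𝓝 ‖dstar‖) := hφt.norm
    have hone : (fun j => ‖dseq (φ j)‖) =ᶠ[atTop] fun _ => (1:ℝ) := by
      refine hev1.mono fun j hj => ?_
      have hne : x (φ j) ≠ 0 := by
        intro h; rw [h, norm_zero] at hj; linarith
      show ‖dseq (φ j)‖ = 1
      rw [hdseq]
      simp only [norm_smul, norm_inv, norm_norm]
      exact inv_mul_cancel₀ (norm_ne_zero_iff.mpr hne)
    have hdstar1 : ‖dstar‖ = 1 := by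
      have h1 : Tendsto (fun _ : ℕ => (1:ℝ)) atTop (𝓝 ‖dstar‖) := hnd.congr' hone
      have h2 : Tendsto (fun _ : ℕ => (1:ℝ)) atTop (𝓝 1) := tendsto_const_nhds
      exact tendsto_nhds_unique h1 h2
    -- L dstar = 0
    have hyφ : Tendsto (fun j => y (φ j)) atTop (𝓝 p) := hyp.comp hφmono.tendsto_atTop
    have hLdstar : L dstar = 0 := by
      have h1 : Tendsto (fun j => L (dseq (φ j))) atTop (𝓝 (L dstar)) :=
        (L.continuous.tendsto _).comp hφt
      have h2 : Tendsto (fun j => ‖x (φ j)‖⁻¹ • y (φ j)) atTop (𝓝 ((0:ℝ) • p)) :=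
        hinv.smul hyφ
      rw [zero_smul] at h2
      have h3 : (fun j => L (dseq (φ j))) = fun j => ‖x (φ j)‖⁻¹ • y (φ j) := by
        funext j
        rw [hdseq]
        show L (‖x (φ j)‖⁻¹ • x (φ j)) = _
        rw [L.map_smul, (hx (φ j)).2]
      rw [h3] at h1
      exact tendsto_nhds_unique h1 h2
    -- g i dstar ≤ 0
    have hgd : ∀ i, g i dstar ≤ 0 := by
      intro i
      have h1 : Tendsto (fun j => g i (dseq (φ j))) atTop (𝓝 (g i dstar)) :=
        ((g i).continuous.tendsto _).comp hφt
      have h2 : Tendsto (fun j => ‖x (φ j)‖⁻¹ * β i) atTop (𝓝 (0 * β i)) :=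
        hinv.mul_const (β i)
      rw [zero_mul] at h2
      refine le_of_tendsto_of_tendsto h1 h2 ?_
      refine hev1.mono fun j hj => ?_
      have hpos : (0:ℝ) < ‖x (φ j)‖ := lt_of_lt_of_le one_pos hj
      show g i (dseq (φ j)) ≤ ‖x (φ j)‖⁻¹ * β i
      rw [hdseq]
      show g i (‖x (φ j)‖⁻¹ • x (φ j)) ≤ _
      rw [(g i).map_smul, smul_eq_mul]
      exact mul_le_mul_of_nonneg_left ((hx (φ j)).1 i) (inv_nonneg.mpr hpos.le)
    -- inner products converge
    have hinner : Tendsto (fun j => (inner ℝ (dseq (φ j)) dstar : ℝ)) atTop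
        (𝓝 (inner ℝ dstar dstar : ℝ)) := hφt.inner tendsto_const_nhds
    have hinner1 : (inner ℝ dstar dstar : ℝ) = 1 := by
      rw [real_inner_self_eq_norm_sq, hdstar1]; norm_num
    have hev2 : ∀ᶠ j in atTop, (1:ℝ)/2 < inner ℝ (dseq (φ j)) dstar := by
      rw [hinner1] at hinner
      exact hinner.eventually (lt_mem_nhds (by norm_num : (1:ℝ)/2 < 1))
    -- per-constraint eventual bounds
    have hev3 : ∀ i, ∀ᶠ j in atTop, g i (x (φ j)) ≤ β i + g i dstar := by
      intro i
      rcases lt_or_eq_of_le (hgd i) with hlt | heq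
      · have hgt : Tendsto (fun j => g i (dseq (φ j))) atTop (𝓝 (g i dstar)) :=
          ((g i).continuous.tendsto _).comp hφt
        have hprod : Tendsto (fun j => ‖x (φ j)‖ * g i (dseq (φ j))) atTop atBot :=
          Filter.Tendsto.atTop_mul_neg hlt hxφtop hgt
        have heq2 : (fun j => ‖x (φ j)‖ * g i (dseq (φ j))) =ᶠ[atTop]
            fun j => g i (x (φ j)) := by
          refine hev1.mono fun j hj => ?_
          have hne : ‖x (φ j)‖ ≠ 0 := by
            intro h; rw [h] at hj; linarith
          show ‖x (φ j)‖ * g i (dseq (φ j)) = g i (x (φ j))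
          rw [hdseq]
          show ‖x (φ j)‖ * g i (‖x (φ j)‖⁻¹ • x (φ j)) = _
          rw [(g i).map_smul, smul_eq_mul, ← mul_assoc, mul_inv_cancel₀ hne, one_mul]
        have hprod2 : Tendsto (fun j => g i (x (φ j))) atTop atBot := by
          rwa [tendsto_congr' heq2] at hprod
        exact hprod2.eventually_le_atBot (β i + g i dstar)
      · refine Filter.Eventually.of_forall fun j => ?_
        rw [heq, add_zero]
        exact (hx (φ j)).1 i
    -- pick a good index and contradict minimality
    have hbig : ∀ᶠ j in atTop, ((1:ℝ)/2 < inner ℝ (dseq (φ j)) dstar) ∧ 1 ≤ ‖x (φ j)‖ ∧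
        ∀ i, g i (x (φ j)) ≤ β i + g i dstar := by
      refine hev2.and (hev1.and ?_)
      exact Filter.eventually_all.mpr hev3
    obtain ⟨j, hj1, hj2, hj3⟩ := hbig.exists
    set X := x (φ j) with hX
    have hXpos : (0:ℝ) < ‖X‖ := lt_of_lt_of_le one_pos hj2
    set x' := X - dstar with hx'
    have hx'C : x' ∈ C := by
      intro i
      have : g i x' = g i X - g i dstar := by rw [hx', (g i).map_sub]
      rw [this]
      have := hj3 i
      linarith
    have hx'L : L x' = y (φ j) := by
      rw [hx', L.map_sub, hLdstar, sub_zero, hX, (hx (φ j)).2]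
    have hXinner : (1:ℝ)/2 < inner ℝ X dstar := by
      have hXd : X = ‖X‖ • dseq (φ j) := by
        rw [hdseq]
        show X = ‖X‖ • (‖x (φ j)‖⁻¹ • x (φ j))
        rw [← hX, smul_smul, mul_inv_cancel₀ (ne_of_gt hXpos), one_smul]
      rw [hXd, real_inner_smul_left]
      nlinarith
    have hlt : ‖x'‖ < ‖X‖ := by
      have hsq : ‖x'‖^2 < ‖X‖^2 := by
        rw [hx', norm_sub_sq_real, hdstar1]
        nlinarith
      exact lt_of_pow_lt_pow_left₀ 2 (norm_nonneg X) hsq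
    exact absurd (hxmin (φ j) x' hx'C hx'L) (not_le.mpr hlt)

end ClosedImage


section Decomp
variable {m n : ℕ} (A : Matrix (Fin m) (Fin n) ℝ) (b : Fin m → ℝ) (c : Fin n → ℝ) (s : ℝ)

def xplusLin (σ : Fin n → Bool) (z : (Fin n → ℝ) × (Fin m → ℝ)) : Fin n → ℝ :=
  fun i => if σ i then z.1 i + s * Aᵀ.mulVec z.2 i else 0

def FlinMap (σ : Fin n → Bool) (z : (Fin n → ℝ) × (Fin m → ℝ)) : (Fin n → ℝ) × (Fin m → ℝ) :=
  (xplusLin A s σ z - z.1, -(s • A.mulVec ((2:ℝ) • xplusLin A s σ z - z.1)))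

noncomputable def xcV (σ : Fin n → Bool) : Fin n → ℝ := fun i => if σ i then -(s * c i) else 0

noncomputable def qconst (σ : Fin n → Bool) : (Fin n → ℝ) × (Fin m → ℝ) :=
  (xcV c s σ, -(s • A.mulVec ((2:ℝ) • xcV c s σ)) + s • b)

def gfun (σ : Fin n → Bool) (i : Fin n) (z : (Fin n → ℝ) × (Fin m → ℝ)) : ℝ :=
  (if σ i then (-1:ℝ) else 1) * (z.1 i + s * Aᵀ.mulVec z.2 i)

noncomputable def betaC (σ : Fin n → Bool) (i : Fin n) : ℝ :=
  (if σ i then (-1:ℝ) else 1) * (s * c i)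

lemma xplusLin_add (σ : Fin n → Bool) (z w : (Fin n → ℝ) × (Fin m → ℝ)) :
    xplusLin A s σ (z + w) = xplusLin A s σ z + xplusLin A s σ w := by
  funext i
  by_cases hσ : σ i <;>
    simp [xplusLin, hσ, Matrix.mulVec_add] <;> ring

lemma xplusLin_smul (σ : Fin n → Bool) (t : ℝ) (z : (Fin n → ℝ) × (Fin m → ℝ)) :
    xplusLin A s σ (t • z) = t • xplusLin A s σ z := by
  funext i
  by_cases hσ : σ i <;>
    simp [xplusLin, hσ, Matrix.mulVec_smul] <;> ring

lemma Flin_isLinear (σ : Fin n → Bool) : IsLinearMap ℝ (FlinMap A s σ) := by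
  constructor
  · intro z w
    unfold FlinMap
    refine Prod.ext ?_ ?_
    · show xplusLin A s σ (z + w) - (z + w).1 =
        (xplusLin A s σ z - z.1) + (xplusLin A s σ w - w.1)
      rw [xplusLin_add]
      show _ - (z.1 + w.1) = _
      abel
    · show -(s • A.mulVec ((2:ℝ) • xplusLin A s σ (z+w) - (z+w).1)) =
        -(s • A.mulVec ((2:ℝ) • xplusLin A s σ z - z.1)) +
        -(s • A.mulVec ((2:ℝ) • xplusLin A s σ w - w.1))
      rw [xplusLin_add]
      have harg : (2:ℝ) • (xplusLin A s σ z + xplusLin A s σ w) - (z + w).1 =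
          ((2:ℝ) • xplusLin A s σ z - z.1) + ((2:ℝ) • xplusLin A s σ w - w.1) := by
        show _ - (z.1 + w.1) = _
        rw [smul_add]; abel
      rw [harg, Matrix.mulVec_add, smul_add]
      abel
  · intro t z
    unfold FlinMap
    refine Prod.ext ?_ ?_
    · show xplusLin A s σ (t • z) - (t • z).1 = t • (xplusLin A s σ z - z.1)
      rw [xplusLin_smul]
      show _ - t • z.1 = _
      rw [smul_sub]
    · show -(s • A.mulVec ((2:ℝ) • xplusLin A s σ (t • z) - (t • z).1)) =
        t • -(s • A.mulVec ((2:ℝ) • xplusLin A s σ z - z.1))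
      rw [xplusLin_smul]
      have harg : (2:ℝ) • (t • xplusLin A s σ z) - (t • z).1 =
          t • ((2:ℝ) • xplusLin A s σ z - z.1) := by
        show _ - t • z.1 = _
        rw [smul_sub, smul_comm]
      rw [harg, Matrix.mulVec_smul, smul_comm, smul_neg]
  
lemma gfun_isLinear (σ : Fin n → Bool) (i : Fin n) : IsLinearMap ℝ (gfun A s σ i) := by
  constructor
  · intro z w
    by_cases hσ : σ i <;>
      simp [gfun, hσ, Matrix.mulVec_add] <;> ring
  · intro t z
    by_cases hσ : σ i <;>
      simp [gfun, hσ, Matrix.mulVec_smul] <;> ring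

/-- On the region cut out by `σ`, the displacement map agrees with the affine map. -/
lemma disp_eq_affine (σ : Fin n → Bool) (z : (Fin n → ℝ) × (Fin m → ℝ))
    (hz : ∀ i, gfun A s σ i z ≤ betaC c s σ i) :
    pdhgT A b c s z - z = qconst A b c s σ + FlinMap A s σ z := by
  have hproj : projPos (z.1 + s • Aᵀ.mulVec z.2 - s • c) = xcV c s σ + xplusLin A s σ z := by
    funext i
    have hi := hz i
    simp only [gfun, betaC] at hi
    simp only [projPos, Pi.add_apply, Pi.sub_apply, Pi.smul_apply, smul_eq_mul, xcV, xplusLin]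
    by_cases hσ : σ i
    · simp only [hσ, if_true] at hi ⊢
      have h0 : 0 ≤ z.1 i + s * Aᵀ.mulVec z.2 i - s * c i := by nlinarith
      rw [max_eq_left h0]; ring
    · simp [hσ] at hi ⊢
      linarith
  unfold pdhgT qconst FlinMap
  refine Prod.ext ?_ ?_
  · show projPos (z.1 + s • Aᵀ.mulVec z.2 - s • c) - z.1 =
      xcV c s σ + (xplusLin A s σ z - z.1)
    rw [hproj]; abel
  · show z.2 - s • A.mulVec ((2:ℝ) • projPos (z.1 + s • Aᵀ.mulVec z.2 - s • c) - z.1) + s • b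
        - z.2 = (-(s • A.mulVec ((2:ℝ) • xcV c s σ)) + s • b) +
          -(s • A.mulVec ((2:ℝ) • xplusLin A s σ z - z.1))
    rw [hproj]
    have harg : (2:ℝ) • (xcV c s σ + xplusLin A s σ z) - z.1 =
        ((2:ℝ) • xcV c s σ) + ((2:ℝ) • xplusLin A s σ z - z.1) := by
      rw [smul_add]; abel
    rw [harg, Matrix.mulVec_add, smul_add]
    abel

/-- Every point lies in one of the regions. -/
lemma coverage (z : (Fin n → ℝ) × (Fin m → ℝ)) :
    ∃ σ : Fin n → Bool, ∀ i, gfun A s σ i z ≤ betaC c s σ i := by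
  classical
  refine ⟨fun i => decide (s * c i ≤ z.1 i + s * Aᵀ.mulVec z.2 i), fun i => ?_⟩
  simp only [gfun, betaC]
  by_cases h : s * c i ≤ z.1 i + s * Aᵀ.mulVec z.2 i
  · simp [h]
  · simp [h]; push_neg at h; nlinarith

end Decomp


section Closedness
variable {m n : ℕ} (A : Matrix (Fin m) (Fin n) ℝ) (b : Fin m → ℝ) (c : Fin n → ℝ) (s : ℝ)

noncomputable def psiEquiv (n m : ℕ) :
    EuclideanSpace ℝ (Fin (n+m)) ≃ₗ[ℝ] (Fin n → ℝ) × (Fin m → ℝ) :=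
  (WithLp.linearEquiv 2 ℝ (Fin (n+m) → ℝ)) ≪≫ₗ
    (LinearEquiv.funCongrLeft ℝ ℝ finSumFinEquiv) ≪≫ₗ
    (LinearEquiv.sumArrowLequivProdArrow (Fin n) (Fin m) ℝ ℝ)

lemma isClosed_disp_range :
    IsClosed {w | ∃ z, w = pdhgT A b c s z - z} := by
  classical
  have hS : {w | ∃ z, w = pdhgT A b c s z - z} =
      ⋃ σ : Fin n → Bool, (fun z => qconst A b c s σ + FlinMap A s σ z) ''
        {z | ∀ i, gfun A s σ i z ≤ betaC c s σ i} := by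
    ext w
    simp only [Set.mem_iUnion, Set.mem_image, Set.mem_setOf_eq]
    constructor
    · rintro ⟨z, rfl⟩
      obtain ⟨σ, hσ⟩ := coverage A c s z
      exact ⟨σ, z, hσ, (disp_eq_affine A b c s σ z hσ).symm⟩
    · rintro ⟨σ, z, hz, rfl⟩
      exact ⟨z, (disp_eq_affine A b c s σ z hz).symm⟩
  rw [hS]
  refine isClosed_iUnion_of_finite fun σ => ?_
  set ψ := psiEquiv n m with hψ
  set L : EuclideanSpace ℝ (Fin (n+m)) →L[ℝ] (Fin n → ℝ) × (Fin m → ℝ) :=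
    LinearMap.toContinuousLinearMap
      ((IsLinearMap.mk' _ (Flin_isLinear A s σ)).comp ψ.toLinearMap) with hL
  set g : Fin n → (EuclideanSpace ℝ (Fin (n+m)) →L[ℝ] ℝ) := fun i =>
    LinearMap.toContinuousLinearMap
      ((IsLinearMap.mk' _ (gfun_isLinear A s σ i)).comp ψ.toLinearMap) with hg
  have hLa : ∀ u, L u = FlinMap A s σ (ψ u) := fun u => rfl
  have hga : ∀ i u, g i u = gfun A s σ i (ψ u) := fun i u => rfl
  have hclosed := closed_image_poly L g (betaC c s σ)
  have himg : L '' {x | ∀ i, g i x ≤ betaC c s σ i} =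
      FlinMap A s σ '' {z | ∀ i, gfun A s σ i z ≤ betaC c s σ i} := by
    ext w
    constructor
    · rintro ⟨u, hu, rfl⟩
      refine ⟨ψ u, fun i => ?_, (hLa u).symm⟩
      rw [← hga i u]; exact hu i
    · rintro ⟨z, hz, rfl⟩
      refine ⟨ψ.symm z, fun i => ?_, ?_⟩
      · rw [hga i, ψ.apply_symm_apply]; exact hz i
      · rw [hLa, ψ.apply_symm_apply]
  rw [himg] at hclosed
  have hsplit : (fun z => qconst A b c s σ + FlinMap A s σ z) ''
      {z | ∀ i, gfun A s σ i z ≤ betaC c s σ i} =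
      (fun w => qconst A b c s σ + w) ''
        (FlinMap A s σ '' {z | ∀ i, gfun A s σ i z ≤ betaC c s σ i}) := by
    rw [← Set.image_comp]; rfl
  rw [hsplit]
  exact (Homeomorph.addLeft (qconst A b c s σ)).isClosedMap _ hclosed

end Closedness

end AuxPDHG


section MainLemmas
variable {m n : ℕ} (A : Matrix (Fin m) (Fin n) ℝ) (b : Fin m → ℝ) (c : Fin n → ℝ) {s : ℝ}

lemma orbit_lemma (hs : 0 < s) (hN : specNorm A < 1/s)
    {v zstar : (Fin n → ℝ) × (Fin m → ℝ)}
    (hzstar : v = pdhgT A b c s zstar - zstar)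
    (hmin : ∀ w, (∃ z, w = pdhgT A b c s z - z) → PsSq A s v ≤ PsSq A s w) :
    ∀ k : ℕ, pdhgT A b c s (zstar + (k:ℝ) • v) = zstar + ((k:ℝ)+1) • v := by
  intro k
  induction k with
  | zero =>
    push_cast
    rw [zero_smul, add_zero, zero_add, one_smul]
    rw [hzstar]; abel
  | succ k ih =>
    push_cast
    set Zk := zstar + (k:ℝ) • v with hZk
    set Zk1 := zstar + ((k:ℝ)+1) • v with hZk1
    set w := pdhgT A b c s Zk1 - Zk1 with hw
    have hminw : PsSq A s v ≤ PsSq A s w := hmin w ⟨Zk1, rfl⟩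
    have hfirm := firmNE A b c hs Zk1 Zk
    have hdz : Zk1 - Zk = v := by rw [hZk, hZk1]; module
    have hT1 : pdhgT A b c s Zk1 = Zk1 + w := by rw [hw]; abel
    have hTdiff : pdhgT A b c s Zk1 - pdhgT A b c s Zk = w := by
      rw [hT1, ih]; abel
    rw [hdz, hTdiff] at hfirm
    have hexp := PsSq_sub A s w v
    have hwv : w = v := by
      have h0 : PsSq A s (w - v) ≤ 0 := by linarith
      exact sub_eq_zero.mp (PsSq_eq_zero A s hN hs h0)
    rw [hT1, hwv, hZk1]
    module

lemma cert_lemma (hs : 0 < s)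
    (hprimal : ¬ ∃ x : Fin n → ℝ, (∀ i, 0 ≤ x i) ∧ A.mulVec x = b)
    (hdual : ¬ ∃ y : Fin m → ℝ, ∀ j, Aᵀ.mulVec y j ≤ c j)
    {v zstar : (Fin n → ℝ) × (Fin m → ℝ)}
    (horbit : ∀ k : ℕ, pdhgT A b c s (zstar + (k:ℝ) • v) = zstar + ((k:ℝ)+1) • v) :
    (∀ i, 0 ≤ v.1 i) ∧ A.mulVec v.1 = 0 ∧ c ⬝ᵥ v.1 < 0 ∧
      (∀ j, Aᵀ.mulVec v.2 j ≤ 0) ∧ 0 < b ⬝ᵥ v.2 ∧ v.1 ≠ 0 ∧ v.2 ≠ 0 := by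
  have hfst : ∀ k : ℕ, projPos ((zstar + (k:ℝ) • v).1 + s • Aᵀ.mulVec (zstar + (k:ℝ) • v).2
      - s • c) = zstar.1 + ((k:ℝ)+1) • v.1 :=
    fun k => congrArg Prod.fst (horbit k)
  have hXmax : ∀ (k : ℕ) (i : Fin n),
      max ((zstar.1 i + s * Aᵀ.mulVec zstar.2 i - s * c i) +
        (k:ℝ) * (v.1 i + s * Aᵀ.mulVec v.2 i)) 0
      = (zstar.1 i + v.1 i) + (k:ℝ) * v.1 i := by
    intro k i
    have h1 := congrFun (hfst k) i
    simp only [projPos, Prod.fst_add, Prod.snd_add, Prod.smul_fst, Prod.smul_snd,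
      Matrix.mulVec_add, Matrix.mulVec_smul, Pi.add_apply, Pi.sub_apply, Pi.smul_apply,
      smul_eq_mul] at h1
    rw [show (zstar.1 i + s * Aᵀ.mulVec zstar.2 i - s * c i) +
        (k:ℝ) * (v.1 i + s * Aᵀ.mulVec v.2 i) =
        zstar.1 i + (k:ℝ) * v.1 i + s * (Aᵀ.mulVec zstar.2 i + (k:ℝ) * Aᵀ.mulVec v.2 i)
          - s * c i by ring]
    rw [show (zstar.1 i + v.1 i) + (k:ℝ) * v.1 i = zstar.1 i + ((k:ℝ)+1) * v.1 i by ring]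
    exact h1
  have hfacts := fun i => coord_facts (fun k => hXmax k i)
  have C1 : ∀ i, 0 ≤ v.1 i := fun i => (hfacts i).1
  have C0 : ∀ i, 0 ≤ zstar.1 i + v.1 i := fun i => (hfacts i).2.2.1
  have C2 : ∀ j, Aᵀ.mulVec v.2 j ≤ 0 := by
    intro j
    have h := (hfacts j).2.1
    nlinarith
  have C3 : ∀ i, 0 < v.1 i → Aᵀ.mulVec v.2 i = 0 ∧ v.1 i = s * (Aᵀ.mulVec zstar.2 i - c i) := by
    intro i hpos
    obtain ⟨hd, ha⟩ := (hfacts i).2.2.2.1 hpos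
    constructor
    · nlinarith
    · nlinarith
  have C4 : ∀ i, Aᵀ.mulVec v.2 i < 0 → v.1 i = 0 ∧ zstar.1 i = 0 := by
    intro i hneg
    have hd : v.1 i + s * Aᵀ.mulVec v.2 i < v.1 i := by nlinarith
    obtain ⟨hw0, hr0⟩ := (hfacts i).2.2.2.2.1 hd
    exact ⟨hw0, by linarith⟩
  -- second-component equations
  have hsnd : ∀ k : ℕ, v.2 = -(s • A.mulVec (zstar.1 + ((k:ℝ)+2) • v.1)) + s • b := by
    intro k
    have h1 : (zstar + (k:ℝ) • v).2 - s • A.mulVec ((2:ℝ) •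
        projPos ((zstar + (k:ℝ) • v).1 + s • Aᵀ.mulVec (zstar + (k:ℝ) • v).2 - s • c)
        - (zstar + (k:ℝ) • v).1) + s • b = zstar.2 + ((k:ℝ)+1) • v.2 :=
      congrArg Prod.snd (horbit k)
    rw [hfst k] at h1
    have harg : (2:ℝ) • (zstar.1 + ((k:ℝ)+1) • v.1) - (zstar + (k:ℝ) • v).1
        = zstar.1 + ((k:ℝ)+2) • v.1 := by
      show (2:ℝ) • (zstar.1 + ((k:ℝ)+1) • v.1) - (zstar.1 + (k:ℝ) • v.1) = _
      module
    rw [harg] at h1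
    have h2 : (zstar + (k:ℝ) • v).2 = zstar.2 + (k:ℝ) • v.2 := rfl
    rw [h2] at h1
    have h3 : v.2 = (zstar.2 + (k:ℝ) • v.2 - s • A.mulVec (zstar.1 + ((k:ℝ)+2) • v.1) + s • b)
        - (zstar.2 + (k:ℝ) • v.2) := by
      rw [h1]
      show v.2 = zstar.2 + ((k:ℝ)+1) • v.2 - (zstar.2 + (k:ℝ) • v.2)
      module
    rw [h3]; abel
  have hAv : A.mulVec v.1 = 0 := by
    have e0 := hsnd 0
    have e1 := hsnd 1
    have h := e0.symm.trans e1
    have h5 : s • A.mulVec (zstar.1 + (((0:ℕ):ℝ)+2) • v.1)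
        = s • A.mulVec (zstar.1 + (((1:ℕ):ℝ)+2) • v.1) := by
      calc s • A.mulVec (zstar.1 + (((0:ℕ):ℝ)+2) • v.1)
          = s • b - (-(s • A.mulVec (zstar.1 + (((0:ℕ):ℝ)+2) • v.1)) + s • b) := by abel
        _ = s • b - (-(s • A.mulVec (zstar.1 + (((1:ℕ):ℝ)+2) • v.1)) + s • b) := by rw [h]
        _ = s • A.mulVec (zstar.1 + (((1:ℕ):ℝ)+2) • v.1) := by abel
    have h6 : A.mulVec (zstar.1 + (((0:ℕ):ℝ)+2) • v.1)
        = A.mulVec (zstar.1 + (((1:ℕ):ℝ)+2) • v.1) :=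
      smul_right_injective (Fin m → ℝ) (ne_of_gt hs) h5
    have harg : (zstar.1 + (((1:ℕ):ℝ)+2) • v.1) - (zstar.1 + (((0:ℕ):ℝ)+2) • v.1) = v.1 := by
      push_cast; module
    calc A.mulVec v.1
        = A.mulVec ((zstar.1 + (((1:ℕ):ℝ)+2) • v.1) - (zstar.1 + (((0:ℕ):ℝ)+2) • v.1)) := by
          rw [harg]
      _ = A.mulVec (zstar.1 + (((1:ℕ):ℝ)+2) • v.1)
          - A.mulVec (zstar.1 + (((0:ℕ):ℝ)+2) • v.1) := Matrix.mulVec_sub A _ _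
      _ = 0 := by rw [h6]; abel
  have hvy : v.2 = s • (b - A.mulVec zstar.1) := by
    have e0 := hsnd 0
    have h1 : A.mulVec (zstar.1 + (((0:ℕ):ℝ)+2) • v.1) = A.mulVec zstar.1 := by
      rw [Matrix.mulVec_add, Matrix.mulVec_smul, hAv, smul_zero, add_zero]
    rw [h1] at e0
    rw [e0, smul_sub]
    abel
  -- v.1 ≠ 0 (otherwise the dual is feasible)
  have hQP : v.1 = 0 → ∀ i, Aᵀ.mulVec v.2 i = 0 → Aᵀ.mulVec zstar.2 i ≤ c i := by
    intro hv1 i hQ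
    have hvi : v.1 i = 0 := by rw [hv1]; rfl
    have h6 := (hfacts i).2.2.2.2.2 ⟨hvi, by rw [hvi, hQ]; ring⟩
    rcases h6 with h6 | h6
    · nlinarith
    · obtain ⟨h7, h8⟩ := h6
      nlinarith
  have hvx_ne : v.1 ≠ 0 := by
    intro hv1
    apply hdual
    have hev : ∀ i, ∀ᶠ t in (atTop : Filter ℝ),
        Aᵀ.mulVec zstar.2 i + t * Aᵀ.mulVec v.2 i ≤ c i := by
      intro i
      rcases lt_or_eq_of_le (C2 i) with hQ | hQ
      · have h1 : Tendsto (fun t : ℝ => t * Aᵀ.mulVec v.2 i) atTop atBot :=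
          Filter.Tendsto.atTop_mul_const_of_neg hQ tendsto_id
        have h2 : Tendsto (fun t : ℝ => Aᵀ.mulVec zstar.2 i + t * Aᵀ.mulVec v.2 i)
            atTop atBot := tendsto_atBot_add_const_left atTop _ h1
        exact h2.eventually_le_atBot (c i)
      · refine Filter.Eventually.of_forall fun t => ?_
        rw [hQ, mul_zero, add_zero]
        exact hQP hv1 i hQ
    obtain ⟨t, ht⟩ := (Filter.eventually_all.mpr hev).exists
    refine ⟨zstar.2 + t • v.2, fun j => ?_⟩
    have h9 := ht j
    have h10 : Aᵀ.mulVec (zstar.2 + t • v.2) j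
        = Aᵀ.mulVec zstar.2 j + t * Aᵀ.mulVec v.2 j := by
      rw [Matrix.mulVec_add, Matrix.mulVec_smul]
      rfl
    rw [h10]
    exact h9
  -- c ⬝ᵥ v.1 < 0
  have hdotvx : v.1 ⬝ᵥ v.1 = -(s * (c ⬝ᵥ v.1)) := by
    have heach : ∀ i, v.1 i * v.1 i = s * (v.1 i * Aᵀ.mulVec zstar.2 i) - s * (c i * v.1 i) := by
      intro i
      rcases lt_or_eq_of_le (C1 i) with h | h
      · have h2 := (C3 i h).2
        nlinarith
      · rw [← h]; ring
    have hsum : v.1 ⬝ᵥ v.1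
        = s * (v.1 ⬝ᵥ Aᵀ.mulVec zstar.2) - s * (c ⬝ᵥ v.1) := by
      unfold dotProduct
      rw [Finset.mul_sum, Finset.mul_sum, ← Finset.sum_sub_distrib]
      exact Finset.sum_congr rfl fun i _ => heach i
    have hzero : v.1 ⬝ᵥ Aᵀ.mulVec zstar.2 = 0 := by
      rw [dotProduct_comm, adjdot A v.1 zstar.2, hAv, zero_dotProduct]
    rw [hzero] at hsum
    linarith [hsum]
  have hvxpos : 0 < v.1 ⬝ᵥ v.1 := by
    rcases lt_or_eq_of_le (dsn v.1) with h | h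
    · exact h
    · exact absurd (dotProduct_self_eq_zero.mp h.symm) hvx_ne
  have cT : c ⬝ᵥ v.1 < 0 := by nlinarith
  -- v.2 ≠ 0 (otherwise the primal is feasible)
  have hvy_ne : v.2 ≠ 0 := by
    intro hv2
    apply hprimal
    have h1 : b - A.mulVec zstar.1 = 0 := by
      rcases smul_eq_zero.mp (hv2 ▸ hvy).symm with h | h
      · exact absurd h (ne_of_gt hs)
      · exact h
    have hb : A.mulVec zstar.1 = b := (sub_eq_zero.mp h1).symm
    refine ⟨zstar.1 + v.1, fun i => C0 i, ?_⟩
    rw [Matrix.mulVec_add, hAv, add_zero, hb]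
  -- 0 < b ⬝ᵥ v.2
  have hzQ : Aᵀ.mulVec v.2 ⬝ᵥ zstar.1 = 0 := by
    refine Finset.sum_eq_zero fun i _ => ?_
    rcases lt_or_eq_of_le (C2 i) with h | h
    · rw [(C4 i h).2, mul_zero]
    · rw [h, zero_mul]
  have hexp2 : v.2 ⬝ᵥ v.2 = s * (b ⬝ᵥ v.2) := by
    have h1 : v.2 ⬝ᵥ A.mulVec zstar.1 = 0 := by
      rw [dotProduct_comm, ← adjdot A zstar.1 v.2, dotProduct_comm]
      rw [dotProduct_comm] at hzQ
      exact hzQ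
    calc v.2 ⬝ᵥ v.2 = v.2 ⬝ᵥ (s • (b - A.mulVec zstar.1)) := by rw [← hvy]
      _ = s * (v.2 ⬝ᵥ b) - s * (v.2 ⬝ᵥ A.mulVec zstar.1) := by
          rw [dotProduct_smul, smul_eq_mul, dotProduct_sub]; ring
      _ = s * (b ⬝ᵥ v.2) := by rw [h1, dotProduct_comm v.2 b]; ring
  have hvypos : 0 < v.2 ⬝ᵥ v.2 := by
    rcases lt_or_eq_of_le (dsn v.2) with h | h
    · exact h
    · exact absurd (dotProduct_self_eq_zero.mp h.symm) hvy_ne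
  have bT : 0 < b ⬝ᵥ v.2 := by nlinarith
  exact ⟨C1, hAv, cT, C2, bT, hvx_ne, hvy_ne⟩

end MainLemmas


section Diverge
variable {m n : ℕ} (A : Matrix (Fin m) (Fin n) ℝ) (b : Fin m → ℝ) (c : Fin n → ℝ) {s : ℝ}

lemma enormVec_neg' {d : ℕ} (x : Fin d → ℝ) : enormVec (-x) = enormVec x := by
  rw [show -x = (-1 : ℝ) • x by simp, enormVec_smul]; simp

lemma diverge_lemma (hs : 0 < s) (hN : specNorm A < 1/s)
    {v zstar : (Fin n → ℝ) × (Fin m → ℝ)}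
    (horbit : ∀ k : ℕ, pdhgT A b c s (zstar + (k:ℝ) • v) = zstar + ((k:ℝ)+1) • v)
    (z : ℕ → (Fin n → ℝ) × (Fin m → ℝ)) (hz : ∀ k, z (k + 1) = pdhgT A b c s (z k))
    (hvx : v.1 ≠ 0) (hvy : v.2 ≠ 0) :
    Tendsto (fun k => enormVec (z k).1) atTop atTop ∧
      Tendsto (fun k => enormVec (z k).2) atTop atTop := by
  have hbound : ∀ k : ℕ, PsSq A s (z k - (zstar + (k:ℝ) • v)) ≤ PsSq A s (z 0 - zstar) := by
    intro k
    induction k with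
    | zero => rw [Nat.cast_zero, zero_smul, add_zero]
    | succ k ih =>
      have hcast : ((k+1:ℕ):ℝ) = (k:ℝ)+1 := by push_cast; ring
      have h1 : z (k+1) - (zstar + ((k+1:ℕ):ℝ) • v) =
          pdhgT A b c s (z k) - pdhgT A b c s (zstar + (k:ℝ) • v) := by
        rw [hz k, horbit k, hcast]
      calc PsSq A s (z (k+1) - (zstar + ((k+1:ℕ):ℝ) • v))
          = PsSq A s (pdhgT A b c s (z k) - pdhgT A b c s (zstar + (k:ℝ) • v)) := by rw [h1]
        _ ≤ PsSq A s (z k - (zstar + (k:ℝ) • v)) := psq_mono A b c hN hs _ _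
        _ ≤ PsSq A s (z 0 - zstar) := ih
  set B := PsSq A s (z 0 - zstar) with hB
  have hc0 : 0 < 1/s - specNorm A := by linarith
  set R := Real.sqrt (B / (1/s - specNorm A)) with hR
  have hcomp : ∀ k : ℕ, enormVec ((z k).1 - (zstar.1 + (k:ℝ) • v.1)) ≤ R ∧
      enormVec ((z k).2 - (zstar.2 + (k:ℝ) • v.2)) ≤ R := by
    intro k
    set u := z k - (zstar + (k:ℝ) • v) with hu
    have h1 := PsSq_coercive A s hN hs u
    have h2 := hbound k
    have hu1 : u.1 = (z k).1 - (zstar.1 + (k:ℝ) • v.1) := rfl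
    have hu2 : u.2 = (z k).2 - (zstar.2 + (k:ℝ) • v.2) := rfl
    have hdd1 := dsn u.1
    have hdd2 := dsn u.2
    have h3 : u.1 ⬝ᵥ u.1 ≤ B / (1/s - specNorm A) := by
      rw [le_div_iff₀ hc0]; nlinarith
    have h4 : u.2 ⬝ᵥ u.2 ≤ B / (1/s - specNorm A) := by
      rw [le_div_iff₀ hc0]; nlinarith
    constructor
    · rw [← hu1, hR]; exact Real.sqrt_le_sqrt h3
    · rw [← hu2, hR]; exact Real.sqrt_le_sqrt h4
  have main : ∀ (w : Fin n → ℝ) (hw : w ≠ 0) (f : ℕ → Fin n → ℝ) (zs : Fin n → ℝ),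
      (∀ k : ℕ, enormVec (f k - (zs + (k:ℝ) • w)) ≤ R) →
      Tendsto (fun k => enormVec (f k)) atTop atTop := by
    intro w hw f zs hf
    have hwpos : 0 < enormVec w := enormVec_pos_of_ne hw
    have hlow : ∀ k : ℕ, (k:ℝ) * enormVec w + -(enormVec zs + R) ≤ enormVec (f k) := by
      intro k
      have hdec : (k:ℝ) • w = f k + (-(zs) + -(f k - (zs + (k:ℝ) • w))) := by abel
      have h5 : enormVec ((k:ℝ) • w) ≤ enormVec (f k) + (enormVec zs + R) :=
        calc enormVec ((k:ℝ) • w) = enormVec (f k + (-(zs) + -(f k - (zs + (k:ℝ) • w)))) := by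
              rw [← hdec]
          _ ≤ enormVec (f k) + enormVec (-(zs) + -(f k - (zs + (k:ℝ) • w))) := enormVec_add_le _ _
          _ ≤ enormVec (f k) + (enormVec (-(zs)) + enormVec (-(f k - (zs + (k:ℝ) • w)))) := by
              linarith [enormVec_add_le (-(zs)) (-(f k - (zs + (k:ℝ) • w)))]
          _ ≤ enormVec (f k) + (enormVec zs + R) := by
              rw [enormVec_neg', enormVec_neg']
              linarith [hf k]
      have h6 : enormVec ((k:ℝ) • w) = (k:ℝ) * enormVec w := by
        rw [enormVec_smul, abs_of_nonneg (Nat.cast_nonneg k)]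
      linarith
    refine tendsto_atTop_mono hlow ?_
    exact tendsto_atTop_add_const_right atTop _
      (Filter.Tendsto.atTop_mul_const hwpos tendsto_natCast_atTop_atTop)
  constructor
  · exact main v.1 hvx (fun k => (z k).1) zstar.1 (fun k => (hcomp k).1)
  · -- same argument for the second component; reuse by instantiating `main` shape on Fin m
    have main2 : ∀ (w : Fin m → ℝ) (hw : w ≠ 0) (f : ℕ → Fin m → ℝ) (zs : Fin m → ℝ),
        (∀ k : ℕ, enormVec (f k - (zs + (k:ℝ) • w)) ≤ R) →
        Tendsto (fun k => enormVec (f k)) atTop atTop := by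
      intro w hw f zs hf
      have hwpos : 0 < enormVec w := enormVec_pos_of_ne hw
      have hlow : ∀ k : ℕ, (k:ℝ) * enormVec w + -(enormVec zs + R) ≤ enormVec (f k) := by
        intro k
        have hdec : (k:ℝ) • w = f k + (-(zs) + -(f k - (zs + (k:ℝ) • w))) := by abel
        have h5 : enormVec ((k:ℝ) • w) ≤ enormVec (f k) + (enormVec zs + R) :=
          calc enormVec ((k:ℝ) • w) = enormVec (f k + (-(zs) + -(f k - (zs + (k:ℝ) • w)))) := by
                rw [← hdec]
            _ ≤ enormVec (f k) + enormVec (-(zs) + -(f k - (zs + (k:ℝ) • w))) := enormVec_add_le _ _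
            _ ≤ enormVec (f k) + (enormVec (-(zs)) + enormVec (-(f k - (zs + (k:ℝ) • w)))) := by
                linarith [enormVec_add_le (-(zs)) (-(f k - (zs + (k:ℝ) • w)))]
            _ ≤ enormVec (f k) + (enormVec zs + R) := by
                rw [enormVec_neg', enormVec_neg']
                linarith [hf k]
        have h6 : enormVec ((k:ℝ) • w) = (k:ℝ) * enormVec w := by
          rw [enormVec_smul, abs_of_nonneg (Nat.cast_nonneg k)]
        linarith
      refine tendsto_atTop_mono hlow ?_
      exact tendsto_atTop_add_const_right atTop _
        (Filter.Tendsto.atTop_mul_const hwpos tendsto_natCast_atTop_atTop)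
    exact main2 v.2 hvy (fun k => (z k).2) zstar.2 (fun k => (hcomp k).2)

end Diverge

/-- **Behavior of PDHG when both primal and dual are infeasible** (Theorem 6(b)):
both primal and dual iterates diverge to infinity, and the components of the infimal
displacement vector `v = (v_x, v_y)` are certificates of dual and primal infeasibility. -/
theorem pdhg_both_infeasible {m n : ℕ} (A : Matrix (Fin m) (Fin n) ℝ)
    (b : Fin m → ℝ) (c : Fin n → ℝ) (s : ℝ) (hs : 0 < s) (hsA : s * specNorm A < 1)
    (hprimal : ¬ ∃ x : Fin n → ℝ, (∀ i, 0 ≤ x i) ∧ A.mulVec x = b)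
    (hdual : ¬ ∃ y : Fin m → ℝ, ∀ j, Aᵀ.mulVec y j ≤ c j)
    (z : ℕ → (Fin n → ℝ) × (Fin m → ℝ))
    (hz : ∀ k, z (k + 1) = pdhgT A b c s (z k))
    (v : (Fin n → ℝ) × (Fin m → ℝ)) (hv : isIDV A s (pdhgT A b c s) v) :
    Filter.Tendsto (fun k => enormVec (z k).1) Filter.atTop Filter.atTop ∧
    Filter.Tendsto (fun k => enormVec (z k).2) Filter.atTop Filter.atTop ∧
    ((∀ i, 0 ≤ v.1 i) ∧ A.mulVec v.1 = 0 ∧ c ⬝ᵥ v.1 < 0) ∧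
    ((∀ j, Aᵀ.mulVec v.2 j ≤ 0) ∧ 0 < b ⬝ᵥ v.2) := by
  have hN : specNorm A < 1/s := by
    rw [lt_div_iff₀ hs]
    rwa [mul_comm] at hsA
  obtain ⟨hvmem, hvmin⟩ := hv
  rw [(isClosed_disp_range A b c s).closure_eq] at hvmem
  obtain ⟨zstar, hzstar⟩ := hvmem
  have hmin2 : ∀ w, (∃ zz, w = pdhgT A b c s zz - zz) → PsSq A s v ≤ PsSq A s w := by
    intro w hw
    have h1 := hvmin w (subset_closure hw)
    have h2 : PsSq A s v = (PsNorm A s v)^2 :=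
      (Real.sq_sqrt (PsSq_nonneg A s hN hs v)).symm
    have h3 : PsSq A s w = (PsNorm A s w)^2 :=
      (Real.sq_sqrt (PsSq_nonneg A s hN hs w)).symm
    rw [h2, h3]
    exact pow_le_pow_left₀ (Real.sqrt_nonneg _) h1 2
  have horbit := orbit_lemma A b c hs hN hzstar hmin2
  obtain ⟨hx1, hx2, hx3, hy1, hy2, hvx_ne, hvy_ne⟩ :=
    cert_lemma A b c hs hprimal hdual horbit
  have hdiv := diverge_lemma A b c hs hN horbit z hz hvx_ne hvy_ne
  exact ⟨hdiv.1, hdiv.2, ⟨hx1, hx2, hx3⟩, hy1, hy2⟩
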